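/- arXiv:1611.02910 — 3 statements merged into one kernel-verified Lean document; each statement's English description precedes it below -/
import Mathlib

section
/- Assume n ≥ 4. For every column k, 3 E[Z_{1,k}² Z_{2,k} Z_{3,k}] + (n−3) E[Z_{1,k} Z_{2,k} Z_{3,k} Z_{4,k}] = 0. -/
open MeasureTheory ProbabilityTheory Real Filter

lemma aux_reindex {Ω : Type*} [MeasurableSpace Ω] {μ : Measure Ω} {ι κ : Type*} [DecidableEq ι] [Nonempty κ]
    {f : ι → Ω → ℝ} (hf : iIndepFun f μ)
    (g : κ → ι) (hg : Function.Injective g) :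
    iIndepFun (fun j => f (g j)) μ := by
  rw [iIndepFun_iff_measure_inter_preimage_eq_mul] at hf ⊢
  intro S sets H
  have hli : ∀ j, Function.invFun g (g j) = j := Function.leftInverse_invFun hg
  have hsets' : ∀ i ∈ S.image g, MeasurableSet ((fun i => sets (Function.invFun g i)) i) := by
    intro i hi
    obtain ⟨j, hj, rfl⟩ := Finset.mem_image.mp hi
    simpa [hli j] using H j hj
  have h2 := hf (S.image g) hsets'
  rw [Finset.prod_image (fun x _ y _ h => hg h)] at h2
  have h3 : (⋂ i ∈ S.image g, f i ⁻¹' sets (Function.invFun g i))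
      = ⋂ j ∈ S, f (g j) ⁻¹' sets j := by
    ext x
    simp only [Set.mem_iInter, Finset.mem_image, forall_exists_index, and_imp]
    constructor
    · intro h j hj
      have := h (g j) j hj rfl
      rwa [hli j] at this
    · rintro h i j hj rfl
      rw [hli j]; exact h j hj
  rw [h3] at h2
  simpa only [hli] using h2

lemma aux_map_pi {Ω : Type*} [MeasureSpace Ω] [IsProbabilityMeasure (ℙ : Measure Ω)]
    {n : ℕ} {X : Fin n → Ω → ℝ} (hmeas : ∀ i, Measurable (X i))
    (hind : iIndepFun X ℙ)
    (μ : Measure ℝ) [IsProbabilityMeasure μ] (hident : ∀ i, Measure.map (X i) ℙ = μ) :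
    Measure.map (fun ω i => X i ω) ℙ = Measure.pi (fun _ => μ) := by
  have hW : Measurable (fun ω i => X i ω) := measurable_pi_lambda _ hmeas
  refine (Measure.pi_eq fun s hs => ?_).symm
  rw [Measure.map_apply hW (MeasurableSet.univ_pi hs)]
  have hpre : (fun ω i => X i ω) ⁻¹' Set.pi Set.univ s = ⋂ i, X i ⁻¹' s i := by
    ext ω; simp [Set.mem_pi]
  rw [hpre, hind.meas_iInter (fun i => ⟨s i, hs i, rfl⟩)]
  exact Finset.prod_congr rfl fun i _ => by
    rw [← hident i, Measure.map_apply (hmeas i) (hs i)]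

set_option maxHeartbeats 1000000 in
theorem stmt_10
    {Ω : Type*} [MeasureSpace Ω] [IsProbabilityMeasure (ℙ : Measure Ω)]
    (n N : ℕ) (hn : 4 ≤ n) (hN : 1 ≤ N)
    (A : Fin n → Fin N → Ω → ℝ)
    (hAmeas : ∀ i k, Measurable (A i k))
    (hIndep : iIndepFun
      (fun p : Fin n × Fin N => A p.1 p.2) ℙ)
    (hIdent : ∀ (k : Fin N) (i j : Fin n), IdentDistrib (A i k) (A j k) ℙ ℙ)
    (Abar : Fin N → Ω → ℝ)
    (hAbar : ∀ k ω, Abar k ω = (∑ i, A i k ω) / n)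
    (s2 : Fin N → Ω → ℝ)
    (hs2 : ∀ k ω, s2 k ω = (∑ i, (A i k ω - Abar k ω) ^ 2) / n)
    (hs2pos : ∀ k, ∀ᵐ ω, 0 < s2 k ω)
    (Z : Fin n → Fin N → Ω → ℝ)
    (hZ : ∀ i k ω, Z i k ω = (A i k ω - Abar k ω) / Real.sqrt (s2 k ω)) :
    ∀ k : Fin N,
      3 * 𝔼[fun ω => (Z ⟨0, by omega⟩ k ω) ^ 2 * (Z ⟨1, by omega⟩ k ω) * (Z ⟨2, by omega⟩ k ω)]
        + ((n : ℝ) - 3) * 𝔼[fun ω => (Z ⟨0, by omega⟩ k ω) * (Z ⟨1, by omega⟩ k ω) * (Z ⟨2, by omega⟩ k ω) * (Z ⟨3, by omega⟩ k ω)] = 0 := by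
  intro k

  set i0 : Fin n := ⟨0, by omega⟩ with hi0
  set i1 : Fin n := ⟨1, by omega⟩ with hi1
  set i2 : Fin n := ⟨2, by omega⟩ with hi2
  set i3 : Fin n := ⟨3, by omega⟩ with hi3
  have hn0 : (n : ℝ) ≠ 0 := Nat.cast_ne_zero.mpr (by omega)
  -- the canonical function F
  set F : Fin n → (Fin n → ℝ) → ℝ := fun i v =>
    (v i - (∑ j, v j) / n) / Real.sqrt ((∑ j, (v j - (∑ l, v l) / n) ^ 2) / n) with hF
  have hFmeas : ∀ i, Measurable (F i) := by
    intro i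
    apply Measurable.div
    · exact (measurable_pi_apply i).sub
        ((Finset.measurable_sum _ (fun j _ => measurable_pi_apply j)).div_const _)
    · apply Measurable.sqrt
      apply Measurable.div_const
      apply Finset.measurable_sum
      intro j _
      exact ((measurable_pi_apply j).sub
        ((Finset.measurable_sum _ (fun l _ => measurable_pi_apply l)).div_const _)).pow_const 2
  have hZF : ∀ i ω, Z i k ω = F i (fun j => A j k ω) := by
    intro i ω
    simp only [hZ, hs2, hAbar, hF]
  have hperm : ∀ (σ : Equiv.Perm (Fin n)) (i : Fin n) (v : Fin n → ℝ),
      F i (fun j => v (σ j)) = F (σ i) v := by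
    intro σ i v
    have h1 : ∑ j, v (σ j) = ∑ j, v j := Equiv.sum_comp σ v
    have h2 : ∑ j, (v (σ j) - (∑ l, v l) / (n:ℝ)) ^ 2
        = ∑ j, (v j - (∑ l, v l) / (n:ℝ)) ^ 2 :=
      Equiv.sum_comp σ (fun j => (v j - (∑ l, v l) / (n:ℝ)) ^ 2)
    simp only [hF, h1, h2]
  -- law invariance
  haveI : Nonempty (Fin n) := ⟨i0⟩
  set μ : Measure ℝ := Measure.map (A i0 k) ℙ with hμ
  haveI : IsProbabilityMeasure μ := Measure.isProbabilityMeasure_map (hAmeas i0 k).aemeasurable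
  have hbase : ∀ g : Fin n → Fin n, Function.Injective g →
      Measure.map (fun ω i => A (g i) k ω) ℙ = Measure.pi (fun _ : Fin n => μ) := by
    intro g hg
    have hginj : Function.Injective (fun i : Fin n => ((g i, k) : Fin n × Fin N)) := by
      intro a b hab
      exact hg (by simpa using congrArg Prod.fst hab)
    have hind : iIndepFun (fun i : Fin n => A (g i) k) ℙ :=
      aux_reindex hIndep _ hginj
    exact aux_map_pi (fun i => hAmeas (g i) k) hind μ
      (fun i => (hIdent k (g i) i0).map_eq)
  have hlaw : ∀ σ : Equiv.Perm (Fin n),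
      Measure.map (fun ω i => A (σ i) k ω) ℙ = Measure.map (fun ω i => A i k ω) ℙ :=
    fun σ => (hbase σ σ.injective).trans (hbase id Function.injective_id).symm
  have hint : ∀ (h : (Fin n → ℝ) → ℝ), Measurable h → ∀ σ : Equiv.Perm (Fin n),
      ∫ ω, h (fun i => A (σ i) k ω) ∂ℙ = ∫ ω, h (fun i => A i k ω) ∂ℙ := by
    intro h hh σ
    have hWσ : Measurable (fun ω (i : Fin n) => A (σ i) k ω) :=
      measurable_pi_lambda _ fun i => hAmeas (σ i) k
    have hW : Measurable (fun ω (i : Fin n) => A i k ω) :=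
      measurable_pi_lambda _ fun i => hAmeas i k
    rw [← integral_map hWσ.aemeasurable hh.aestronglyMeasurable, hlaw σ,
      integral_map hW.aemeasurable hh.aestronglyMeasurable]
  have key4 : ∀ (σ : Equiv.Perm (Fin n)) (a b c d : Fin n),
      ∫ ω, Z (σ a) k ω * Z (σ b) k ω * Z (σ c) k ω * Z (σ d) k ω ∂ℙ
        = ∫ ω, Z a k ω * Z b k ω * Z c k ω * Z d k ω ∂ℙ := by
    intro σ a b c d
    have hh : Measurable (fun v => F a v * F b v * F c v * F d v) :=
      (((hFmeas a).mul (hFmeas b)).mul (hFmeas c)).mul (hFmeas d)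
    have := hint _ hh σ
    simp only [show ∀ (x : Fin n) (ω : Ω), F x (fun i => A (σ i) k ω)
        = F (σ x) (fun j => A j k ω) from fun x ω => hperm σ x (fun j => A j k ω)] at this
    simp only [hZF]
    exact this
  -- measurability and boundedness of Z
  have hW : Measurable (fun ω (i : Fin n) => A i k ω) :=
    measurable_pi_lambda _ fun i => hAmeas i k
  have hZm : ∀ i, Measurable (Z i k) := by
    intro i
    have : Z i k = fun ω => F i (fun j => A j k ω) := funext (hZF i)
    rw [this]
    exact (hFmeas i).comp hW
  have hs2nn : ∀ ω, 0 ≤ s2 k ω := by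
    intro ω; rw [hs2]; positivity
  have hZb : ∀ i ω, |Z i k ω| ≤ Real.sqrt n := by
    intro i ω
    by_cases h0 : s2 k ω = 0
    · simp [hZ, h0, Real.sqrt_nonneg]
    · have hpos : 0 < s2 k ω := lt_of_le_of_ne (hs2nn ω) (Ne.symm h0)
      have h1 : (Z i k ω) ^ 2 ≤ (n : ℝ) := by
        rw [hZ, div_pow, Real.sq_sqrt (hs2nn ω), div_le_iff₀ hpos]
        have h2 : (A i k ω - Abar k ω) ^ 2 ≤ ∑ j, (A j k ω - Abar k ω) ^ 2 :=
          Finset.single_le_sum (f := fun j => (A j k ω - Abar k ω) ^ 2) (fun j _ => sq_nonneg _) (Finset.mem_univ i)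
        have h3 : ∑ j, (A j k ω - Abar k ω) ^ 2 = (n : ℝ) * s2 k ω := by
          rw [hs2]; field_simp
        linarith
      calc |Z i k ω| = Real.sqrt ((Z i k ω) ^ 2) := (Real.sqrt_sq_eq_abs _).symm
        _ ≤ Real.sqrt n := Real.sqrt_le_sqrt h1
  have hProdInt : ∀ a b c d : Fin n,
      Integrable (fun ω => Z a k ω * Z b k ω * Z c k ω * Z d k ω) ℙ := by
    intro a b c d
    refine Integrable.mono' (integrable_const ((Real.sqrt n) ^ 4))
      ((((hZm a).mul (hZm b)).mul (hZm c)).mul (hZm d)).aestronglyMeasurable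
      (ae_of_all _ ?_)
    intro ω
    have hs := Real.sqrt_nonneg (n : ℝ)
    calc ‖Z a k ω * Z b k ω * Z c k ω * Z d k ω‖
        = |Z a k ω| * |Z b k ω| * |Z c k ω| * |Z d k ω| := by
          simp [abs_mul]
      _ ≤ Real.sqrt n * Real.sqrt n * Real.sqrt n * Real.sqrt n := by
          gcongr <;> first | exact abs_nonneg _ | exact hZb _ ω
      _ = (Real.sqrt n) ^ 4 := by ring
  -- sum of Z is zero
  have hsum0 : ∀ ω, ∑ i, Z i k ω = 0 := by
    intro ω
    simp only [hZ, ← Finset.sum_div]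
    have h : ∑ i, (A i k ω - Abar k ω) = 0 := by
      rw [Finset.sum_sub_distrib, Finset.sum_const, Finset.card_univ, Fintype.card_fin, hAbar]
      rw [nsmul_eq_mul, mul_div_cancel₀ _ hn0, sub_self]
    rw [h, zero_div]
  have hsplit : ∑ i : Fin n, ∫ ω, Z i k ω * Z i0 k ω * Z i1 k ω * Z i2 k ω ∂ℙ = 0 := by
    rw [← integral_finset_sum _ (fun i _ => hProdInt i i0 i1 i2)]
    have hp : ∀ ω, (∑ i, Z i k ω * Z i0 k ω * Z i1 k ω * Z i2 k ω) = 0 := by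
      intro ω
      rw [← Finset.sum_mul, ← Finset.sum_mul, ← Finset.sum_mul, hsum0, zero_mul, zero_mul,
        zero_mul]
    simp only [hp, integral_zero]
  obtain ⟨E0, hE0⟩ : ∃ x : ℝ, x = ∫ ω, Z i0 k ω * Z i0 k ω * Z i1 k ω * Z i2 k ω ∂ℙ := ⟨_, rfl⟩
  obtain ⟨E3, hE3⟩ : ∃ x : ℝ, x = ∫ ω, Z i0 k ω * Z i1 k ω * Z i2 k ω * Z i3 k ω ∂ℙ := ⟨_, rfl⟩
  have hne : i0 ≠ i1 ∧ i0 ≠ i2 ∧ i1 ≠ i2 ∧ i0 ≠ i3 ∧ i1 ≠ i3 ∧ i2 ≠ i3 := by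
    refine ⟨?_, ?_, ?_, ?_, ?_, ?_⟩ <;> simp [hi0, hi1, hi2, hi3, Fin.ext_iff]
  have hterm : ∀ i : Fin n,
      ∫ ω, Z i k ω * Z i0 k ω * Z i1 k ω * Z i2 k ω ∂ℙ = if (i : ℕ) ≤ 2 then E0 else E3 := by
    intro i
    by_cases h0 : i = i0
    · subst h0; rw [if_pos (by simp [hi0]), hE0]
    · by_cases h1 : i = i1
      · subst h1
        rw [if_pos (by simp [hi1])]
        have hk := key4 (Equiv.swap i0 i1) i0 i1 i0 i2
        rw [Equiv.swap_apply_left, Equiv.swap_apply_right,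
          Equiv.swap_apply_of_ne_of_ne hne.2.1.symm hne.2.2.1.symm] at hk
        rw [hk, hE0]
        congr 1; funext ω; ring
      · by_cases h2 : i = i2
        · subst h2
          rw [if_pos (by simp [hi2])]
          have hk := key4 (Equiv.swap i0 i2) i0 i2 i1 i0
          rw [Equiv.swap_apply_left, Equiv.swap_apply_right,
            Equiv.swap_apply_of_ne_of_ne hne.1.symm hne.2.2.1] at hk
          rw [hk, hE0]
          congr 1; funext ω; ring
        · have hgt : ¬ ((i : ℕ) ≤ 2) := by
            simp only [hi0, hi1, hi2, Fin.ext_iff] at h0 h1 h2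
            omega
          rw [if_neg hgt]
          by_cases h3 : i = i3
          · subst h3
            rw [hE3]
            congr 1; funext ω; ring
          · have hk := key4 (Equiv.swap i3 i) i3 i0 i1 i2
            rw [Equiv.swap_apply_left,
              Equiv.swap_apply_of_ne_of_ne hne.2.2.2.1 (Ne.symm h0),
              Equiv.swap_apply_of_ne_of_ne hne.2.2.2.2.1 (Ne.symm h1),
              Equiv.swap_apply_of_ne_of_ne hne.2.2.2.2.2 (Ne.symm h2)] at hk
            rw [hk, hE3]
            congr 1; funext ω; ring
  -- evaluate the sum
  have hfilter : (Finset.univ.filter (fun i : Fin n => (i : ℕ) ≤ 2)) = {i0, i1, i2} := by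
    ext x
    simp only [Finset.mem_filter, Finset.mem_univ, true_and, Finset.mem_insert,
      Finset.mem_singleton, hi0, hi1, hi2, Fin.ext_iff]
    omega
  have hcard : (Finset.univ.filter (fun i : Fin n => (i : ℕ) ≤ 2)).card = 3 := by
    rw [hfilter]
    rw [Finset.card_insert_of_notMem (by simp [hne.1, hne.2.1]),
      Finset.card_insert_of_notMem (by simp [hne.2.2.1]), Finset.card_singleton]
  have hcard' : (Finset.univ.filter (fun i : Fin n => ¬ ((i : ℕ) ≤ 2))).card = n - 3 := by
    have := Finset.card_filter_add_card_filter_not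
      (s := (Finset.univ : Finset (Fin n))) (p := fun i : Fin n => (i : ℕ) ≤ 2)
    rw [hcard, Finset.card_univ, Fintype.card_fin] at this
    omega
  have hsum : ∑ i : Fin n, ∫ ω, Z i k ω * Z i0 k ω * Z i1 k ω * Z i2 k ω ∂ℙ
      = 3 * E0 + ((n : ℝ) - 3) * E3 := by
    rw [Finset.sum_congr rfl (fun i _ => hterm i), Finset.sum_ite, Finset.sum_const,
      Finset.sum_const, hcard, hcard', nsmul_eq_mul, nsmul_eq_mul,
      Nat.cast_sub (by omega), Nat.cast_ofNat]
  have hmain : 3 * E0 + ((n : ℝ) - 3) * E3 = 0 := by rw [← hsum]; exact hsplit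
  have hE0' : 𝔼[fun ω => (Z i0 k ω) ^ 2 * (Z i1 k ω) * (Z i2 k ω)] = E0 := by
    rw [hE0]; congr 1; funext ω; ring
  calc 3 * 𝔼[fun ω => (Z i0 k ω) ^ 2 * (Z i1 k ω) * (Z i2 k ω)]
        + ((n : ℝ) - 3) * 𝔼[fun ω => Z i0 k ω * Z i1 k ω * Z i2 k ω * Z i3 k ω]
      = 3 * E0 + ((n : ℝ) - 3) * E3 := by rw [hE0', hE3]
    _ = 0 := hmain
end

section
/- Under Assumptions 1 and 2, sup_k |E[Z_{1,k} Z_{2,k} Z_{3,k} Z_{4,k}]| = O(1/n²) as n → ∞; that is, there is a constant M (depending only on the constants in Assumptions 1 and 2) such that for all n ≥ 4, all N and all columns k, |E[Z_{1,k} Z_{2,k} Z_{3,k} Z_{4,k}]| ≤ M/n². -/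
open MeasureTheory ProbabilityTheory Real Filter

namespace Stmt12Aux

open Finset

variable {n : ℕ}

/-- empirical mean of a vector -/
noncomputable def mn (n : ℕ) (x : Fin n → ℝ) : ℝ := (∑ j, x j) / n

/-- empirical variance of a vector -/
noncomputable def sv (n : ℕ) (x : Fin n → ℝ) : ℝ := (∑ j, (x j - mn n x) ^ 2) / n

/-- standardized entry -/
noncomputable def z (n : ℕ) (i : Fin n) (x : Fin n → ℝ) : ℝ :=
  (x i - mn n x) / Real.sqrt (sv n x)

lemma measurable_mn : Measurable (mn n) := by
  exact (Finset.measurable_sum _ (fun j _ => measurable_pi_apply j)).div_const _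

lemma measurable_sv : Measurable (sv n) := by
  exact (Finset.measurable_sum _ (fun j _ =>
    ((measurable_pi_apply j).sub measurable_mn).pow_const 2)).div_const _

lemma measurable_z (i : Fin n) : Measurable (z n i) :=
  ((measurable_pi_apply i).sub measurable_mn).div measurable_sv.sqrt

lemma sv_nonneg (x : Fin n → ℝ) : 0 ≤ sv n x :=
  div_nonneg (Finset.sum_nonneg fun j _ => sq_nonneg _) (Nat.cast_nonneg n)

lemma sum_sub_mn (hn : 0 < n) (x : Fin n → ℝ) : ∑ i, (x i - mn n x) = 0 := by
  have hn' : (n : ℝ) ≠ 0 := Nat.cast_ne_zero.2 hn.ne'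
  rw [Finset.sum_sub_distrib, Finset.sum_const, Finset.card_univ, Fintype.card_fin,
    nsmul_eq_mul, mn, mul_div_cancel₀ _ hn', sub_self]

lemma sum_sq_sub_mn (hn : 0 < n) (x : Fin n → ℝ) :
    ∑ j, (x j - mn n x) ^ 2 = n * sv n x := by
  have hn' : (n : ℝ) ≠ 0 := Nat.cast_ne_zero.2 hn.ne'
  rw [sv, mul_div_cancel₀ _ hn']

lemma sum_z (hn : 0 < n) (x : Fin n → ℝ) : ∑ i, z n i x = 0 := by
  unfold z
  rw [← Finset.sum_div, sum_sub_mn hn x, zero_div]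

lemma sum_z_mul_self (hn : 0 < n) {x : Fin n → ℝ} (hx : sv n x ≠ 0) :
    ∑ i, z n i x * z n i x = n := by
  have h1 : ∀ i, z n i x * z n i x = (x i - mn n x) ^ 2 / sv n x := by
    intro i
    rw [z, div_mul_div_comm, Real.mul_self_sqrt (sv_nonneg x), ← sq]
  rw [Finset.sum_congr rfl (fun i _ => h1 i), ← Finset.sum_div, sum_sq_sub_mn hn x,
    mul_div_assoc, div_self hx, mul_one]

lemma abs_z_le (hn : 0 < n) (i : Fin n) (x : Fin n → ℝ) :
    |z n i x| ≤ Real.sqrt n := by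
  by_cases hx : sv n x = 0
  · simp [z, hx, Real.sqrt_zero, div_zero, Real.sqrt_nonneg]
  · have hs : 0 < sv n x := lt_of_le_of_ne (sv_nonneg x) (Ne.symm hx)
    have key : (x i - mn n x) ^ 2 ≤ n * sv n x := by
      rw [← sum_sq_sub_mn hn x]
      exact Finset.single_le_sum (f := fun j => (x j - mn n x) ^ 2)
        (fun j _ => sq_nonneg _) (Finset.mem_univ i)
    have hsq : 0 < Real.sqrt (sv n x) := Real.sqrt_pos.2 hs
    rw [z, abs_div, abs_of_nonneg (Real.sqrt_nonneg _), div_le_iff₀ hsq,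
      ← Real.sqrt_mul (Nat.cast_nonneg n)]
    rw [← Real.sqrt_sq_eq_abs]
    exact Real.sqrt_le_sqrt key

lemma z_comp (σ : Equiv.Perm (Fin n)) (i : Fin n) (x : Fin n → ℝ) :
    z n i (x ∘ σ) = z n (σ i) x := by
  have hm : mn n (x ∘ σ) = mn n x := by
    unfold mn
    rw [show ∑ j, (x ∘ σ) j = ∑ j, x (σ j) from rfl, Equiv.sum_comp σ x]
  have hs : sv n (x ∘ σ) = sv n x := by
    unfold sv
    rw [hm, show ∑ j, ((x ∘ σ) j - mn n x) ^ 2 = ∑ j, (x (σ j) - mn n x) ^ 2 from rfl,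
      Equiv.sum_comp σ (fun j => (x j - mn n x) ^ 2)]
  rw [z, z, hm, hs]
  rfl

section Perms

variable {a b c d a' b' c' d' : Fin n}

lemma exists_perm_of_injOn (s : Finset (Fin n)) (f : Fin n → Fin n)
    (hinj : Set.InjOn f ↑s) :
    ∃ σ : Equiv.Perm (Fin n), ∀ i ∈ s, σ i = f i := by
  classical
  obtain ⟨g, hg⟩ := Finset.exists_equiv_extend_of_card_eq
    (t := (Finset.univ : Finset (Fin n))) Finset.card_univ.symm
    (s := s) (f := f) (Finset.subset_univ _) hinj
  refine ⟨g.trans (Equiv.subtypeUnivEquiv fun x => Finset.mem_univ x), fun i hi => ?_⟩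
  have := hg i hi
  simpa [Equiv.trans_apply, Equiv.subtypeUnivEquiv] using this

lemma exists_perm2 (hab : a ≠ b) (hab' : a' ≠ b') :
    ∃ σ : Equiv.Perm (Fin n), σ a = a' ∧ σ b = b' := by
  classical
  set f : Fin n → Fin n := fun x => if x = a then a' else b' with hf
  have fa : f a = a' := by simp [hf]
  have fb : f b = b' := by simp [hf, Ne.symm hab]
  have hinj : Set.InjOn f ↑({a, b} : Finset (Fin n)) := by
    intro x hx y hy hxy
    simp only [Finset.coe_insert, Set.mem_insert_iff, Finset.coe_singleton,
      Set.mem_singleton_iff] at hx hy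
    rcases hx with rfl | rfl <;> rcases hy with rfl | rfl <;>
      simp only [fa, fb] at hxy <;>
      first
        | rfl
        | exact absurd hxy hab'
        | exact absurd hxy.symm hab'
  obtain ⟨σ, hσ⟩ := exists_perm_of_injOn {a, b} f hinj
  exact ⟨σ, by rw [hσ a (by simp), fa], by rw [hσ b (by simp), fb]⟩

lemma exists_perm3 (hab : a ≠ b) (hac : a ≠ c) (hbc : b ≠ c)
    (hab' : a' ≠ b') (hac' : a' ≠ c') (hbc' : b' ≠ c') :
    ∃ σ : Equiv.Perm (Fin n), σ a = a' ∧ σ b = b' ∧ σ c = c' := by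
  classical
  set f : Fin n → Fin n := fun x => if x = a then a' else if x = b then b' else c' with hf
  have fa : f a = a' := by simp [hf]
  have fb : f b = b' := by simp [hf, Ne.symm hab]
  have fc : f c = c' := by simp [hf, Ne.symm hac, Ne.symm hbc]
  have hinj : Set.InjOn f ↑({a, b, c} : Finset (Fin n)) := by
    intro x hx y hy hxy
    simp only [Finset.coe_insert, Set.mem_insert_iff, Finset.coe_singleton,
      Set.mem_singleton_iff] at hx hy
    rcases hx with rfl | rfl | rfl <;> rcases hy with rfl | rfl | rfl <;>
      simp only [fa, fb, fc] at hxy <;>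
      first
        | rfl
        | exact absurd hxy hab' | exact absurd hxy hac' | exact absurd hxy hbc'
        | exact absurd hxy.symm hab' | exact absurd hxy.symm hac'
        | exact absurd hxy.symm hbc'
  obtain ⟨σ, hσ⟩ := exists_perm_of_injOn {a, b, c} f hinj
  exact ⟨σ, by rw [hσ a (by simp), fa], by rw [hσ b (by simp), fb],
    by rw [hσ c (by simp), fc]⟩

lemma exists_perm4 (hab : a ≠ b) (hac : a ≠ c) (had : a ≠ d)
    (hbc : b ≠ c) (hbd : b ≠ d) (hcd : c ≠ d)
    (hab' : a' ≠ b') (hac' : a' ≠ c') (had' : a' ≠ d')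
    (hbc' : b' ≠ c') (hbd' : b' ≠ d') (hcd' : c' ≠ d') :
    ∃ σ : Equiv.Perm (Fin n), σ a = a' ∧ σ b = b' ∧ σ c = c' ∧ σ d = d' := by
  classical
  set f : Fin n → Fin n :=
    fun x => if x = a then a' else if x = b then b' else if x = c then c' else d' with hf
  have fa : f a = a' := by simp [hf]
  have fb : f b = b' := by simp [hf, Ne.symm hab]
  have fc : f c = c' := by simp [hf, Ne.symm hac, Ne.symm hbc]
  have fd : f d = d' := by simp [hf, Ne.symm had, Ne.symm hbd, Ne.symm hcd]
  have hinj : Set.InjOn f ↑({a, b, c, d} : Finset (Fin n)) := by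
    intro x hx y hy hxy
    simp only [Finset.coe_insert, Set.mem_insert_iff, Finset.coe_singleton,
      Set.mem_singleton_iff] at hx hy
    rcases hx with rfl | rfl | rfl | rfl <;> rcases hy with rfl | rfl | rfl | rfl <;>
      simp only [fa, fb, fc, fd] at hxy <;>
      first
        | rfl
        | exact absurd hxy hab' | exact absurd hxy hac' | exact absurd hxy had'
        | exact absurd hxy hbc' | exact absurd hxy hbd' | exact absurd hxy hcd'
        | exact absurd hxy.symm hab' | exact absurd hxy.symm hac'
        | exact absurd hxy.symm had' | exact absurd hxy.symm hbc'
        | exact absurd hxy.symm hbd' | exact absurd hxy.symm hcd'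
  obtain ⟨σ, hσ⟩ := exists_perm_of_injOn {a, b, c, d} f hinj
  exact ⟨σ, by rw [hσ a (by simp), fa], by rw [hσ b (by simp), fb],
    by rw [hσ c (by simp), fc], by rw [hσ d (by simp), fd]⟩

end Perms

section SumSplit

lemma sum_split_one (hn : 1 ≤ n) (g : Fin n → ℝ) (b : Fin n) (vb P : ℝ)
    (hb : g b = vb) (hP : ∀ i, i ≠ b → g i = P) :
    ∑ i, g i = vb + ((n : ℝ) - 1) * P := by
  classical
  rw [← Finset.sum_sdiff (Finset.subset_univ ({b} : Finset (Fin n)))]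
  have h1 : ∑ i ∈ Finset.univ \ {b}, g i = ((n : ℝ) - 1) * P := by
    rw [Finset.sum_congr rfl (fun i hi => hP i (by simpa using (Finset.mem_sdiff.1 hi).2))]
    rw [Finset.sum_const, Finset.card_sdiff_of_subset (Finset.subset_univ _), Finset.card_univ,
      Fintype.card_fin, Finset.card_singleton, nsmul_eq_mul, Nat.cast_sub hn]
    push_cast
    ring
  rw [h1, Finset.sum_singleton, hb]
  ring

lemma sum_split_two (hn : 2 ≤ n) (g : Fin n → ℝ) (b c : Fin n) (hbc : b ≠ c)
    (vb vc P : ℝ) (hb : g b = vb) (hc : g c = vc)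
    (hP : ∀ i, i ≠ b → i ≠ c → g i = P) :
    ∑ i, g i = vb + vc + ((n : ℝ) - 2) * P := by
  classical
  rw [← Finset.sum_sdiff (Finset.subset_univ ({b, c} : Finset (Fin n)))]
  have hcard : ({b, c} : Finset (Fin n)).card = 2 := by
    rw [Finset.card_insert_of_notMem (by simp [hbc]), Finset.card_singleton]
  have h1 : ∑ i ∈ Finset.univ \ {b, c}, g i = ((n : ℝ) - 2) * P := by
    rw [Finset.sum_congr rfl (fun i hi => by
      have hi' := (Finset.mem_sdiff.1 hi).2
      simp only [Finset.mem_insert, Finset.mem_singleton, not_or] at hi'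
      exact hP i hi'.1 hi'.2)]
    rw [Finset.sum_const, Finset.card_sdiff_of_subset (Finset.subset_univ _), Finset.card_univ,
      Fintype.card_fin, hcard, nsmul_eq_mul, Nat.cast_sub hn]
    push_cast
    ring
  have h2 : ∑ i ∈ ({b, c} : Finset (Fin n)), g i = vb + vc := by
    rw [Finset.sum_insert (by simp [hbc]), Finset.sum_singleton, hb, hc]
  rw [h1, h2]
  ring

lemma sum_split_three (hn : 3 ≤ n) (g : Fin n → ℝ) (b c d : Fin n)
    (hbc : b ≠ c) (hbd : b ≠ d) (hcd : c ≠ d)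
    (vb vc vd P : ℝ) (hb : g b = vb) (hc : g c = vc) (hd : g d = vd)
    (hP : ∀ i, i ≠ b → i ≠ c → i ≠ d → g i = P) :
    ∑ i, g i = vb + vc + vd + ((n : ℝ) - 3) * P := by
  classical
  rw [← Finset.sum_sdiff (Finset.subset_univ ({b, c, d} : Finset (Fin n)))]
  have hcard : ({b, c, d} : Finset (Fin n)).card = 3 := by
    rw [Finset.card_insert_of_notMem (by simp [hbc, hbd]),
      Finset.card_insert_of_notMem (by simp [hcd]), Finset.card_singleton]
  have h1 : ∑ i ∈ Finset.univ \ {b, c, d}, g i = ((n : ℝ) - 3) * P := by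
    rw [Finset.sum_congr rfl (fun i hi => by
      have hi' := (Finset.mem_sdiff.1 hi).2
      simp only [Finset.mem_insert, Finset.mem_singleton, not_or] at hi'
      exact hP i hi'.1 hi'.2.1 hi'.2.2)]
    rw [Finset.sum_const, Finset.card_sdiff_of_subset (Finset.subset_univ _), Finset.card_univ,
      Fintype.card_fin, hcard, nsmul_eq_mul, Nat.cast_sub hn]
    push_cast
    ring
  have h2 : ∑ i ∈ ({b, c, d} : Finset (Fin n)), g i = vb + vc + vd := by
    rw [Finset.sum_insert (by simp [hbc, hbd]), Finset.sum_insert (by simp [hcd]),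
      Finset.sum_singleton, hb, hc, hd]
    ring
  rw [h1, h2]
  ring

end SumSplit


lemma main {n : ℕ} (hn : 4 ≤ n) (ν : Measure (Fin n → ℝ)) [IsProbabilityMeasure ν]
    (hinv : ∀ σ : Equiv.Perm (Fin n), Measure.map (fun x => x ∘ σ) ν = ν)
    (hsv : ∀ᵐ x ∂ν, sv n x ≠ 0)
    (a b c d : Fin n) (hab : a ≠ b) (hac : a ≠ c) (had : a ≠ d)
    (hbc : b ≠ c) (hbd : b ≠ d) (hcd : c ≠ d) :
    |∫ x, z n a x * z n b x * z n c x * z n d x ∂ν| ≤ 48 / (n : ℝ) ^ 2 := by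
  classical
  have hn0 : 0 < n := by omega
  have hnR : (0 : ℝ) < n := by exact_mod_cast hn0
  have h4R : (4 : ℝ) ≤ n := by exact_mod_cast hn
  have hzme : ∀ i : Fin n, Measurable (z n i) := measurable_z
  have hsqrt_mul : Real.sqrt n * Real.sqrt n = (n : ℝ) := Real.mul_self_sqrt hnR.le
  -- integrability of 4-fold products
  have hint4 : ∀ p q r s : Fin n,
      Integrable (fun x => z n p x * z n q x * z n r x * z n s x) ν := by
    intro p q r s
    refine Integrable.mono' (integrable_const ((n : ℝ) ^ 2))
      ((((hzme p).mul (hzme q)).mul (hzme r)).mul (hzme s)).aestronglyMeasurable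
      (ae_of_all ν fun x => ?_)
    have h1 : ‖z n p x * z n q x * z n r x * z n s x‖
        = |z n p x| * |z n q x| * |z n r x| * |z n s x| := by
      simp [Real.norm_eq_abs, abs_mul]
    rw [h1]
    calc |z n p x| * |z n q x| * |z n r x| * |z n s x|
        ≤ Real.sqrt n * Real.sqrt n * Real.sqrt n * Real.sqrt n := by
          gcongr <;> exact abs_z_le hn0 _ x
      _ = (Real.sqrt ↑n * Real.sqrt ↑n) * (Real.sqrt ↑n * Real.sqrt ↑n) := by ring
      _ = (n : ℝ) * (n : ℝ) := by rw [hsqrt_mul]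
      _ = (n : ℝ) ^ 2 := by ring
  have hint2 : ∀ p q : Fin n, Integrable (fun x => z n p x * z n q x) ν := by
    intro p q
    refine Integrable.mono' (integrable_const ((n : ℝ)))
      ((hzme p).mul (hzme q)).aestronglyMeasurable (ae_of_all ν fun x => ?_)
    have h1 : ‖z n p x * z n q x‖ = |z n p x| * |z n q x| := by
      simp [Real.norm_eq_abs, abs_mul]
    rw [h1]
    calc |z n p x| * |z n q x| ≤ Real.sqrt n * Real.sqrt n := by
          gcongr <;> exact abs_z_le hn0 _ x
      _ = (n : ℝ) := hsqrt_mul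
  -- the 4-index moments
  set J : Fin n → Fin n → Fin n → Fin n → ℝ :=
    fun p q r s => ∫ x, z n p x * z n q x * z n r x * z n s x ∂ν with hJ
  have hJperm : ∀ (σ : Equiv.Perm (Fin n)) (p q r s : Fin n),
      J (σ p) (σ q) (σ r) (σ s) = J p q r s := by
    intro σ p q r s
    have hmeasσ : Measurable (fun x : Fin n → ℝ => x ∘ σ) :=
      measurable_pi_lambda _ fun i => measurable_pi_apply (σ i)
    have hmap : ∫ x, z n p (x ∘ σ) * z n q (x ∘ σ) * z n r (x ∘ σ) * z n s (x ∘ σ) ∂ν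
        = ∫ x, z n p x * z n q x * z n r x * z n s x ∂ν := by
      conv_rhs => rw [← hinv σ]
      rw [integral_map (f := fun x => z n p x * z n q x * z n r x * z n s x) hmeasσ.aemeasurable
        ((((hzme p).mul (hzme q)).mul (hzme r)).mul (hzme s)).aestronglyMeasurable]
    calc J (σ p) (σ q) (σ r) (σ s)
        = ∫ x, z n p (x ∘ σ) * z n q (x ∘ σ) * z n r (x ∘ σ) * z n s (x ∘ σ) ∂ν := by
          simp only [hJ]
          exact integral_congr_ae (ae_of_all ν fun x => by simp only [z_comp])
      _ = J p q r s := by rw [hmap, hJ]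
  have hJeq : ∀ p q r s p' q' r' s' : Fin n,
      (∃ σ : Equiv.Perm (Fin n), σ p = p' ∧ σ q = q' ∧ σ r = r' ∧ σ s = s') →
      J p' q' r' s' = J p q r s := by
    rintro p q r s p' q' r' s' ⟨σ, h1, h2, h3, h4⟩
    rw [← h1, ← h2, ← h3, ← h4, hJperm]
  -- second moments
  have hJ2perm : ∀ (σ : Equiv.Perm (Fin n)) (p q : Fin n),
      (∫ x, z n (σ p) x * z n (σ q) x ∂ν) = ∫ x, z n p x * z n q x ∂ν := by
    intro σ p q
    have hmeasσ : Measurable (fun x : Fin n → ℝ => x ∘ σ) :=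
      measurable_pi_lambda _ fun i => measurable_pi_apply (σ i)
    have hmap : ∫ x, z n p (x ∘ σ) * z n q (x ∘ σ) ∂ν
        = ∫ x, z n p x * z n q x ∂ν := by
      conv_rhs => rw [← hinv σ]
      rw [integral_map (f := fun x => z n p x * z n q x) hmeasσ.aemeasurable
        ((hzme p).mul (hzme q)).aestronglyMeasurable]
    rw [← hmap]
    exact integral_congr_ae (ae_of_all ν fun x => by simp only [z_comp])
  set V : ℝ := ∫ x, z n a x * z n a x ∂ν with hV
  have hV2 : ∀ i : Fin n, (∫ x, z n i x * z n i x ∂ν) = V := by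
    intro i
    rw [hV, ← hJ2perm (Equiv.swap a i) a a, Equiv.swap_apply_left]
  -- abbreviations
  set P : ℝ := J a b c d with hP
  set Q : ℝ := J a a b c with hQ
  set R : ℝ := J a a a b with hR
  set T : ℝ := J a a b b with hT
  set U : ℝ := J a a a a with hU
  -- exchange instances
  have hUi : ∀ i : Fin n, J i i i i = U := by
    intro i
    exact hJeq a a a a i i i i ⟨Equiv.swap a i, by simp, by simp, by simp, by simp⟩
  have hTi : ∀ i : Fin n, i ≠ b → J i i b b = T := by
    intro i hib
    obtain ⟨σ, h1, h2⟩ := exists_perm2 hab hib.symm.symm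
    exact hJeq a a b b i i b b ⟨σ, h1, h1, h2, h2⟩
  -- reorder helper
  have hJcomm : ∀ p q r s p' q' r' s' : Fin n,
      (∀ x : Fin n → ℝ, z n p x * z n q x * z n r x * z n s x
        = z n p' x * z n q' x * z n r' x * z n s' x) →
      J p q r s = J p' q' r' s' := by
    intro p q r s p' q' r' s' h
    simp only [hJ]
    exact integral_congr_ae (ae_of_all ν fun x => h x)
  -- (i): n * V = n
  have hVeq : (n : ℝ) * V = n := by
    have h1 : ∑ i : Fin n, (∫ x, z n i x * z n i x ∂ν) = (n : ℝ) * V := by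
      rw [Finset.sum_congr rfl (fun i _ => hV2 i), Finset.sum_const, Finset.card_univ,
        Fintype.card_fin, nsmul_eq_mul]
    have h2 : ∑ i : Fin n, (∫ x, z n i x * z n i x ∂ν) = (n : ℝ) := by
      rw [← integral_finset_sum _ (fun i _ => hint2 i i)]
      have := integral_congr_ae (μ := ν)
        (g := fun _ => (n : ℝ))
        (Filter.Eventually.mono hsv (fun x hx => sum_z_mul_self hn0 hx))
      rw [this, integral_const]
      simp
    rw [h1] at h2
    exact h2
  -- (iv): U + (n-1) R = 0
  have e4 : U + ((n : ℝ) - 1) * R = 0 := by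
    have hsum : ∑ i : Fin n, J i b b b = 0 := by
      simp only [hJ]
      rw [← integral_finset_sum _ (fun i _ => hint4 i b b b)]
      have hzero : ∀ x : Fin n → ℝ,
          (∑ i, z n i x * z n b x * z n b x * z n b x) = 0 := by
        intro x
        rw [← Finset.sum_mul, ← Finset.sum_mul, ← Finset.sum_mul, sum_z hn0,
          zero_mul, zero_mul, zero_mul]
      rw [integral_congr_ae (ae_of_all ν hzero), integral_zero]
    have hsplit : ∑ i : Fin n, J i b b b = U + ((n : ℝ) - 1) * R := by
      refine sum_split_one (by omega) _ b U R ?_ ?_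
      · rw [← hUi b]
      · intro i hib
        have h1 : J i b b b = J b b b i := hJcomm i b b b b b b i (fun x => by ring)
        obtain ⟨σ, h2, h3⟩ := exists_perm2 hab hib.symm
        rw [h1, hJeq a a a b b b b i ⟨σ, h2, h2, h2, h3⟩, hR]
    rw [← hsplit, hsum]
  -- (v): U + (n-1) T = n
  have e5 : U + ((n : ℝ) - 1) * T = n := by
    have hsum : ∑ i : Fin n, J i i b b = (n : ℝ) := by
      simp only [hJ]
      rw [← integral_finset_sum _ (fun i _ => hint4 i i b b)]
      have hae : (fun x => ∑ i, z n i x * z n i x * z n b x * z n b x)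
          =ᵐ[ν] (fun x => (n : ℝ) * (z n b x * z n b x)) := by
        filter_upwards [hsv] with x hx
        rw [← Finset.sum_mul, ← Finset.sum_mul, sum_z_mul_self hn0 hx, mul_assoc]
      rw [integral_congr_ae hae, integral_const_mul, hV2 b, hVeq]
    have hsplit : ∑ i : Fin n, J i i b b = U + ((n : ℝ) - 1) * T := by
      refine sum_split_one (by omega) _ b U T ?_ ?_
      · rw [← hUi b]
      · intro i hib
        exact hTi i hib
    rw [← hsplit, hsum]
  -- (iii): 0 ≤ U and n * U ≤ n ^ 2
  have hUnonneg : 0 ≤ U := by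
    rw [hU, hJ]
    refine integral_nonneg fun x => ?_
    have : z n a x * z n a x * z n a x * z n a x
        = (z n a x * z n a x) * (z n a x * z n a x) := by ring
    rw [this]
    exact mul_self_nonneg _
  have hUle : U ≤ n := by
    have hsum : ∑ i : Fin n, J i i i i = (n : ℝ) * U := by
      rw [Finset.sum_congr rfl (fun i _ => hUi i), Finset.sum_const, Finset.card_univ,
        Fintype.card_fin, nsmul_eq_mul]
    have hle : ∑ i : Fin n, J i i i i ≤ (n : ℝ) ^ 2 := by
      simp only [hJ]
      rw [← integral_finset_sum _ (fun i _ => hint4 i i i i)]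
      have hbound : ∫ x, (∑ i, z n i x * z n i x * z n i x * z n i x) ∂ν
          ≤ ∫ _, (n : ℝ) ^ 2 ∂ν := by
        refine integral_mono_ae (integrable_finset_sum _ fun i _ => hint4 i i i i)
          (integrable_const _) ?_
        filter_upwards [hsv] with x hx
        calc ∑ i, z n i x * z n i x * z n i x * z n i x
            = ∑ i, (z n i x * z n i x) ^ 2 :=
              Finset.sum_congr rfl (fun i _ => by ring)
          _ ≤ (∑ i, z n i x * z n i x) ^ 2 :=
              Finset.sum_sq_le_sq_sum_of_nonneg (fun i _ => mul_self_nonneg _)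
          _ = (n : ℝ) ^ 2 := by rw [sum_z_mul_self hn0 hx]
      calc ∫ x, (∑ i, z n i x * z n i x * z n i x * z n i x) ∂ν
          ≤ ∫ _, (n : ℝ) ^ 2 ∂ν := hbound
        _ = (n : ℝ) ^ 2 := by rw [integral_const]; simp
    rw [hsum] at hle
    nlinarith
  -- (vi): R + T + (n-2) Q = 0
  have e6 : R + T + ((n : ℝ) - 2) * Q = 0 := by
    have hsum : ∑ i : Fin n, J i b b c = 0 := by
      simp only [hJ]
      rw [← integral_finset_sum _ (fun i _ => hint4 i b b c)]
      have hzero : ∀ x : Fin n → ℝ,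
          (∑ i, z n i x * z n b x * z n b x * z n c x) = 0 := by
        intro x
        rw [← Finset.sum_mul, ← Finset.sum_mul, ← Finset.sum_mul, sum_z hn0,
          zero_mul, zero_mul, zero_mul]
      rw [integral_congr_ae (ae_of_all ν hzero), integral_zero]
    have hsplit : ∑ i : Fin n, J i b b c = R + T + ((n : ℝ) - 2) * Q := by
      refine sum_split_two (by omega) _ b c hbc R T Q ?_ ?_ ?_
      · obtain ⟨σ, h1, h2⟩ := exists_perm2 hab hbc
        rw [hJeq a a a b b b b c ⟨σ, h1, h1, h1, h2⟩, hR]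
      · have h1 : J c b b c = J b b c c := hJcomm c b b c b b c c (fun x => by ring)
        obtain ⟨σ, h2, h3⟩ := exists_perm2 hab hbc
        rw [h1, hJeq a a b b b b c c ⟨σ, h2, h2, h3, h3⟩, hT]
      · intro i hib hic
        have h1 : J i b b c = J b b i c := hJcomm i b b c b b i c (fun x => by ring)
        obtain ⟨σ, h2, h3, h4⟩ := exists_perm3 hab hac hbc hib.symm hbc hic.symm.symm
        rw [h1, hJeq a a b c b b i c ⟨σ, h2, h2, h3, h4⟩, hQ]
    rw [← hsplit, hsum]
  -- (vii): 3 Q + (n-3) P = 0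
  have e7 : 3 * Q + ((n : ℝ) - 3) * P = 0 := by
    have hsum : ∑ i : Fin n, J i b c d = 0 := by
      simp only [hJ]
      rw [← integral_finset_sum _ (fun i _ => hint4 i b c d)]
      have hzero : ∀ x : Fin n → ℝ,
          (∑ i, z n i x * z n b x * z n c x * z n d x) = 0 := by
        intro x
        rw [← Finset.sum_mul, ← Finset.sum_mul, ← Finset.sum_mul, sum_z hn0,
          zero_mul, zero_mul, zero_mul]
      rw [integral_congr_ae (ae_of_all ν hzero), integral_zero]
    have hsplit : ∑ i : Fin n, J i b c d = Q + Q + Q + ((n : ℝ) - 3) * P := by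
      refine sum_split_three (by omega) _ b c d hbc hbd hcd Q Q Q P ?_ ?_ ?_ ?_
      · obtain ⟨σ, h1, h2, h3⟩ := exists_perm3 hab hac hbc hbc hbd hcd
        rw [hJeq a a b c b b c d ⟨σ, h1, h1, h2, h3⟩, hQ]
      · have h1 : J c b c d = J c c b d := hJcomm c b c d c c b d (fun x => by ring)
        obtain ⟨σ, h2, h3, h4⟩ := exists_perm3 hab hac hbc hbc.symm hcd hbd
        rw [h1, hJeq a a b c c c b d ⟨σ, h2, h2, h3, h4⟩, hQ]
      · have h1 : J d b c d = J d d b c := hJcomm d b c d d d b c (fun x => by ring)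
        obtain ⟨σ, h2, h3, h4⟩ := exists_perm3 hab hac hbc hbd.symm hcd.symm hbc
        rw [h1, hJeq a a b c d d b c ⟨σ, h2, h2, h3, h4⟩, hQ]
      · intro i hib hic hid
        obtain ⟨σ, h1, h2, h3, h4⟩ := exists_perm4 hab hac had hbc hbd hcd
          hib.symm.symm hic.symm.symm hid.symm.symm hbc hbd hcd
        rw [hJeq a b c d i b c d ⟨σ, h1, h2, h3, h4⟩, hP]
    have h := hsplit
    rw [hsum] at h
    linarith
  -- solve the linear system
  have hPform : ((n : ℝ) - 1) * ((n : ℝ) - 2) * ((n : ℝ) - 3) * P = 3 * n - 6 * U := by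
    linear_combination ((n : ℝ) - 1) * ((n : ℝ) - 2) * e7 - 3 * ((n : ℝ) - 1) * e6
      + 3 * e4 + 3 * e5
  have hD : (0 : ℝ) < ((n : ℝ) - 1) * ((n : ℝ) - 2) * ((n : ℝ) - 3) :=
    mul_pos (mul_pos (by linarith) (by linarith)) (by linarith)
  have habsX : |3 * (n : ℝ) - 6 * U| ≤ 3 * n := by
    rw [abs_le]
    constructor <;> nlinarith
  have hPeq : P = (3 * (n : ℝ) - 6 * U) / (((n : ℝ) - 1) * ((n : ℝ) - 2) * ((n : ℝ) - 3)) := by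
    rw [eq_div_iff hD.ne']
    linear_combination hPform
  show |P| ≤ 48 / (n : ℝ) ^ 2
  rw [hPeq, abs_div, abs_of_pos hD, div_le_div_iff₀ hD (by positivity)]
  nlinarith [habsX, mul_le_mul_of_nonneg_right habsX (sq_nonneg ((n : ℝ))),
    mul_nonneg (mul_nonneg (sub_nonneg.2 (by linarith : (1:ℝ) ≤ n))
      (sub_nonneg.2 (by linarith : (2:ℝ) ≤ n))) (sub_nonneg.2 (by linarith : (3:ℝ) ≤ n)),
    sq_nonneg ((n : ℝ) - 4), mul_nonneg (sq_nonneg ((n:ℝ) - 4)) hnR.le]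

end Stmt12Aux

open Stmt12Aux

/-- there is a constant `M` (depending only on the constants appearing in
Assumptions 1 and 2) such that `|E[Z_{1,k} Z_{2,k} Z_{3,k} Z_{4,k}]| ≤ M/n²` for all
`n ≥ 4`, all `N` and all columns `k`. -/
theorem stmt_12
    (C d δmin δmax : ℝ) (hC : 0 < C) (hd : 0 < d)
    (hδmin : 0 < δmin) (hδminmax : δmin ≤ δmax)
    (V₀ : Set ℝ) (hV₀ : V₀ ∈ nhds (0 : ℝ)) :
    ∃ M : ℝ,
      ∀ (Ω : Type) [MeasureSpace Ω] [IsProbabilityMeasure (ℙ : Measure Ω)]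
        (n N : ℕ), 4 ≤ n → 1 ≤ N →
        ∀ (A : Fin n → Fin N → Ω → ℝ),
        (∀ i k, Measurable (A i k)) →
        iIndepFun (fun q : Fin n × Fin N => A q.1 q.2) ℙ →
        (∀ (k : Fin N) (i j : Fin n), IdentDistrib (A i k) (A j k) ℙ ℙ) →
        ∀ (m σ2 : Fin N → ℝ),
        -- `m_k` is the mean and `σ_k²` the variance of the entries of column `k`
        (∀ k i, 𝔼[A i k] = m k) →
        (∀ k i, 𝔼[fun ω => (A i k ω - m k) ^ 2] = σ2 k) →
        -- Assumption 1
        (∀ lam ∈ V₀, ∀ (k : Fin N) (i : Fin n),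
          𝔼[fun ω => Real.exp (lam * ((A i k ω - m k) ^ 2 - σ2 k))]
            ≤ C * Real.exp (d * lam ^ 2)) →
        (∀ lam ∈ V₀, ∀ (k : Fin N) (i : Fin n),
          𝔼[fun ω => Real.exp (lam * (A i k ω - m k))] ≤ C * Real.exp (d * lam ^ 2)) →
        (∀ lam ∈ V₀, ∀ (k : Fin N) (i j : Fin n), i ≠ j →
          𝔼[fun ω => Real.exp (lam * (A i k ω - m k) * (A j k ω - m k))]
            ≤ C * Real.exp (d * lam ^ 2)) →
        -- Assumption 2
        (∀ k, δmin ≤ σ2 k) → (∀ k, σ2 k ≤ δmax) →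
        ∀ (Abar : Fin N → Ω → ℝ), (∀ k ω, Abar k ω = (∑ i, A i k ω) / n) →
        ∀ (s2 : Fin N → Ω → ℝ),
        (∀ k ω, s2 k ω = (∑ i, (A i k ω - Abar k ω) ^ 2) / n) →
        (∀ k, ∀ᵐ ω, 0 < s2 k ω) →
        ∀ (Z : Fin n → Fin N → Ω → ℝ),
        (∀ i k ω, Z i k ω = (A i k ω - Abar k ω) / Real.sqrt (s2 k ω)) →
        ∀ (hn4 : 4 ≤ n) (k : Fin N),
          |𝔼[fun ω => Z ⟨0, by omega⟩ k ω * Z ⟨1, by omega⟩ k ω *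
              Z ⟨2, by omega⟩ k ω * Z ⟨3, by omega⟩ k ω]| ≤ M / (n : ℝ) ^ 2 := by
  classical
  refine ⟨48, ?_⟩
  intro Ω _ _ n N hn _ A hAmeas hindep hident m σ2 _ _ _ _ _ _ _ Abar hAbar s2 hs2 hs2pos
    Z hZ hn4 k
  -- the vector of column k
  set vec : Ω → (Fin n → ℝ) := fun ω i => A i k ω with hvecdef
  have hvec : Measurable vec := measurable_pi_lambda _ fun i => hAmeas i k
  -- the law of one entry
  set μ : Measure ℝ := Measure.map (A ⟨0, by omega⟩ k) ℙ with hμdef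
  have hμprob : IsProbabilityMeasure μ := Measure.isProbabilityMeasure_map (hAmeas _ _).aemeasurable
  have hmapid : ∀ i : Fin n, Measure.map (A i k) ℙ = μ := fun i =>
    (hident k i ⟨0, by omega⟩).map_eq
  have hpre : ∀ (i : Fin n) (t : Set ℝ), MeasurableSet t → ℙ (A i k ⁻¹' t) = μ t := by
    intro i t ht
    rw [← hmapid i, Measure.map_apply (hAmeas i k) ht]
  -- independence within column k
  have hAk : ∀ t : Fin n → Set ℝ, (∀ i, MeasurableSet (t i)) →
      ℙ (⋂ i, A i k ⁻¹' t i) = ∏ i, ℙ (A i k ⁻¹' t i) := by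
    intro t ht
    have h := hindep.meas_iInter
      (s := fun q : Fin n × Fin N => if q.2 = k then A q.1 k ⁻¹' t q.1 else Set.univ) ?_
    · have hset : (⋂ q : Fin n × Fin N,
          (if q.2 = k then A q.1 k ⁻¹' t q.1 else Set.univ)) = ⋂ i, A i k ⁻¹' t i := by
        ext ω
        simp only [Set.mem_iInter]
        constructor
        · intro h' i
          have := h' (i, k)
          simpa using this
        · intro h' q
          obtain ⟨i, j⟩ := q
          by_cases hj : j = k
          · subst hj
            simpa using h' i
          · simp [hj]
      have hprod : (∏ q : Fin n × Fin N,
          ℙ (if q.2 = k then A q.1 k ⁻¹' t q.1 else Set.univ))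
          = ∏ i, ℙ (A i k ⁻¹' t i) := by
        rw [Fintype.prod_prod_type]
        refine Finset.prod_congr rfl fun i _ => ?_
        have h1 : ∀ j : Fin N, ℙ (if (i, j).2 = k then A (i, j).1 k ⁻¹' t (i, j).1 else Set.univ)
            = if j = k then ℙ (A i k ⁻¹' t i) else 1 := by
          intro j
          by_cases hj : j = k <;> simp [hj]
        rw [Finset.prod_congr rfl fun j _ => h1 j,
          Finset.prod_ite_eq' Finset.univ k (fun _ => ℙ (A i k ⁻¹' t i))]
        simp
      rw [hset] at h
      rw [h, hprod]
    · intro q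
      obtain ⟨i, j⟩ := q
      by_cases hj : j = k
      · subst hj
        exact ⟨t i, ht i, by simp⟩
      · exact ⟨Set.univ, MeasurableSet.univ, by simp [hj]⟩
  -- the law of the (permuted) column vector is the product measure
  have hpiσ : ∀ σ : Equiv.Perm (Fin n),
      Measure.map (fun ω (i : Fin n) => A (σ i) k ω) ℙ = Measure.pi fun _ : Fin n => μ := by
    intro σ
    refine (Measure.pi_eq fun t ht => ?_).symm
    have hmv : Measurable (fun ω (i : Fin n) => A (σ i) k ω) :=
      measurable_pi_lambda _ fun i => hAmeas (σ i) k
    rw [Measure.map_apply hmv (MeasurableSet.univ_pi ht)]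
    have hset : (fun ω (i : Fin n) => A (σ i) k ω) ⁻¹' Set.pi Set.univ t
        = ⋂ j, A j k ⁻¹' t (σ.symm j) := by
      ext ω
      simp only [Set.mem_preimage, Set.mem_univ_pi, Set.mem_iInter]
      constructor
      · intro h' j
        have := h' (σ.symm j)
        simpa [Equiv.apply_symm_apply] using this
      · intro h' i
        have := h' (σ i)
        simpa [Equiv.symm_apply_apply] using this
    rw [hset, hAk (fun j => t (σ.symm j)) (fun j => ht _)]
    calc ∏ j, ℙ (A j k ⁻¹' t (σ.symm j)) = ∏ j, μ (t (σ.symm j)) :=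
          Finset.prod_congr rfl fun j _ => hpre j _ (ht _)
      _ = ∏ i, μ (t i) := Equiv.prod_comp σ.symm (fun i => μ (t i))
  -- the law of the column vector
  set ν : Measure (Fin n → ℝ) := Measure.map vec ℙ with hνdef
  have hνprob : IsProbabilityMeasure ν := Measure.isProbabilityMeasure_map hvec.aemeasurable
  have hνpi : ν = Measure.pi fun _ : Fin n => μ := by
    have := hpiσ 1
    simpa using this
  -- invariance under permutations
  have hinv : ∀ σ : Equiv.Perm (Fin n), Measure.map (fun x => x ∘ σ) ν = ν := by
    intro σ
    have hmeasσ : Measurable (fun x : Fin n → ℝ => x ∘ σ) :=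
      measurable_pi_lambda _ fun i => measurable_pi_apply (σ i)
    rw [hνdef, Measure.map_map hmeasσ hvec]
    have : (fun x : Fin n → ℝ => x ∘ σ) ∘ vec = fun ω (i : Fin n) => A (σ i) k ω := rfl
    rw [this, hpiσ σ, ← hνpi]
  -- pointwise identification
  have hmn : ∀ ω, mn n (vec ω) = Abar k ω := by
    intro ω
    rw [hAbar k ω]
    rfl
  have hsveq : ∀ ω, sv n (vec ω) = s2 k ω := by
    intro ω
    rw [hs2 k ω, sv]
    congr 1
    refine Finset.sum_congr rfl fun j _ => ?_
    rw [hmn ω]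
  have hzeq : ∀ (i : Fin n) ω, z n i (vec ω) = Z i k ω := by
    intro i ω
    rw [hZ i k ω, z, hmn ω, hsveq ω]
  -- a.e. positivity of the variance under ν
  have hsvν : ∀ᵐ x ∂ν, sv n x ≠ 0 := by
    have hms : MeasurableSet {x : Fin n → ℝ | sv n x ≠ 0} :=
      (measurable_sv (measurableSet_singleton (0 : ℝ))).compl
    rw [hνdef, ae_map_iff hvec.aemeasurable hms]
    filter_upwards [hs2pos k] with ω h
    show sv n (vec ω) ≠ 0
    rw [hsveq ω]
    exact ne_of_gt h
  -- distinctness of the first four indices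
  have h01 : (⟨0, by omega⟩ : Fin n) ≠ ⟨1, by omega⟩ := by simp [Fin.ext_iff]
  have h02 : (⟨0, by omega⟩ : Fin n) ≠ ⟨2, by omega⟩ := by simp [Fin.ext_iff]
  have h03 : (⟨0, by omega⟩ : Fin n) ≠ ⟨3, by omega⟩ := by simp [Fin.ext_iff]
  have h12 : (⟨1, by omega⟩ : Fin n) ≠ ⟨2, by omega⟩ := by simp [Fin.ext_iff]
  have h13 : (⟨1, by omega⟩ : Fin n) ≠ ⟨3, by omega⟩ := by simp [Fin.ext_iff]
  have h23 : (⟨2, by omega⟩ : Fin n) ≠ ⟨3, by omega⟩ := by simp [Fin.ext_iff]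
  have key := main hn4 ν hinv hsvν ⟨0, by omega⟩ ⟨1, by omega⟩ ⟨2, by omega⟩ ⟨3, by omega⟩
    h01 h02 h03 h12 h13 h23
  have heq : 𝔼[fun ω => Z ⟨0, by omega⟩ k ω * Z ⟨1, by omega⟩ k ω *
      Z ⟨2, by omega⟩ k ω * Z ⟨3, by omega⟩ k ω]
      = ∫ x, z n ⟨0, by omega⟩ x * z n ⟨1, by omega⟩ x * z n ⟨2, by omega⟩ x *
          z n ⟨3, by omega⟩ x ∂ν := by
    rw [hνdef, integral_map (f := fun x => z n ⟨0, by omega⟩ x * z n ⟨1, by omega⟩ x *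
        z n ⟨2, by omega⟩ x * z n ⟨3, by omega⟩ x) hvec.aemeasurable
      ((((measurable_z _).mul (measurable_z _)).mul (measurable_z _)).mul
        (measurable_z _)).aestronglyMeasurable]
    refine integral_congr_ae (ae_of_all _ fun ω => ?_)
    simp only [hzeq]
  rw [heq]
  exact key
end

section
/- With full ascertainment and p_control = K(1−P)/(P(1−K)), the conditional expectation of W_i W_j given that both individuals are in the study equals E[W_i W_j | ε_i = ε_j = 1] = [ ((1−P)/P)·P(Y_i = Y_j = 1) − (K(1−P)/(P(1−K)))·P(Y_i ≠ Y_j) + (K²(1−P)/(P(1−K)²))·P(Y_i = Y_j = 0) ] / [ P(Y_i = Y_j = 1) + (K(1−P)/(P(1−K)))²·P(Y_i = Y_j = 0) + (K(1−P)/(P(1−K)))·P(Y_i ≠ Y_j) ], provided the denominator is positive. -/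
open MeasureTheory ProbabilityTheory Real Filter

/-- expression of `E[W_i W_j | ε_i = ε_j = 1]` in terms of the joint
probabilities of `(Y_i, Y_j)`, under full ascertainment and
`p_control = K(1−P)/(P(1−K))`. -/
theorem stmt_14
    {Ω : Type*} [MeasureSpace Ω] [IsProbabilityMeasure (ℙ : Measure Ω)]
    (K P : ℝ) (hK : 0 < K) (hK1 : K < 1) (hP : 0 < P) (hP1 : P < 1)
    (Yi Yj Vi Vj Ui Uj : Ω → ℝ)
    (hYi : Measurable Yi) (hYj : Measurable Yj) (hVi : Measurable Vi)
    (hVj : Measurable Vj) (hUi : Measurable Ui) (hUj : Measurable Uj)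
    (hYi01 : ∀ ω, Yi ω = 0 ∨ Yi ω = 1) (hYj01 : ∀ ω, Yj ω = 0 ∨ Yj ω = 1)
    (hVi01 : ∀ ω, Vi ω = 0 ∨ Vi ω = 1) (hVj01 : ∀ ω, Vj ω = 0 ∨ Vj ω = 1)
    (hUi01 : ∀ ω, Ui ω = 0 ∨ Ui ω = 1) (hUj01 : ∀ ω, Uj ω = 0 ∨ Uj ω = 1)
    -- full ascertainment : `V_i, V_j ~ Bernoulli(1)`
    (hVilaw : (ℙ {ω | Vi ω = 1}).toReal = 1)
    (hVjlaw : (ℙ {ω | Vj ω = 1}).toReal = 1)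
    -- `U_i, U_j ~ Bernoulli(p_control)` with `p_control = K(1−P)/(P(1−K))`
    (hUilaw : (ℙ {ω | Ui ω = 1}).toReal = K * (1 - P) / (P * (1 - K)))
    (hUjlaw : (ℙ {ω | Uj ω = 1}).toReal = K * (1 - P) / (P * (1 - K)))
    -- `U_i, U_j, V_i, V_j` are mutually independent, and jointly independent of `(Y_i, Y_j)`
    (hIndepUV : iIndepFun ![Ui, Uj, Vi, Vj] ℙ)
    (hIndepY : IndepFun (fun ω => (Ui ω, Uj ω, Vi ω, Vj ω)) (fun ω => (Yi ω, Yj ω)) ℙ)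
    (εi εj Wi Wj : Ω → ℝ)
    (hεi : ∀ ω, εi ω = Vi ω * Yi ω + Ui ω * (1 - Yi ω))
    (hεj : ∀ ω, εj ω = Vj ω * Yj ω + Uj ω * (1 - Yj ω))
    (hWi : ∀ ω, Wi ω = εi ω * (Yi ω - P) / Real.sqrt (P * (1 - P)))
    (hWj : ∀ ω, Wj ω = εj ω * (Yj ω - P) / Real.sqrt (P * (1 - P)))
    -- the denominator is positive
    (hden : 0 < (ℙ {ω | Yi ω = 1 ∧ Yj ω = 1}).toReal
        + (K * (1 - P) / (P * (1 - K))) ^ 2 * (ℙ {ω | Yi ω = 0 ∧ Yj ω = 0}).toReal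
        + (K * (1 - P) / (P * (1 - K))) * (ℙ {ω | Yi ω ≠ Yj ω}).toReal) :
    (∫ ω in {ω | εi ω = 1 ∧ εj ω = 1}, Wi ω * Wj ω)
        / (ℙ {ω | εi ω = 1 ∧ εj ω = 1}).toReal
      = ((1 - P) / P * (ℙ {ω | Yi ω = 1 ∧ Yj ω = 1}).toReal
          - K * (1 - P) / (P * (1 - K)) * (ℙ {ω | Yi ω ≠ Yj ω}).toReal
          + K ^ 2 * (1 - P) / (P * (1 - K) ^ 2) * (ℙ {ω | Yi ω = 0 ∧ Yj ω = 0}).toReal)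
        / ((ℙ {ω | Yi ω = 1 ∧ Yj ω = 1}).toReal
          + (K * (1 - P) / (P * (1 - K))) ^ 2 * (ℙ {ω | Yi ω = 0 ∧ Yj ω = 0}).toReal
          + (K * (1 - P) / (P * (1 - K))) * (ℙ {ω | Yi ω ≠ Yj ω}).toReal) := by
  classical
  have hP' : (0:ℝ) < 1 - P := by linarith
  have hK' : (0:ℝ) < 1 - K := by linarith
  have hPP : (0:ℝ) < P * (1 - P) := mul_pos hP hP'
  set s : ℝ := Real.sqrt (P * (1 - P)) with hs_def
  have hsq : s * s = P * (1 - P) := Real.mul_self_sqrt hPP.le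
  set p : ℝ := K * (1 - P) / (P * (1 - K)) with hp_def
  -- measurable sets
  have mYi1 : MeasurableSet {ω | Yi ω = 1} := hYi (measurableSet_singleton 1)
  have mYi0 : MeasurableSet {ω | Yi ω = 0} := hYi (measurableSet_singleton 0)
  have mYj1 : MeasurableSet {ω | Yj ω = 1} := hYj (measurableSet_singleton 1)
  have mYj0 : MeasurableSet {ω | Yj ω = 0} := hYj (measurableSet_singleton 0)
  have mVi1 : MeasurableSet {ω | Vi ω = 1} := hVi (measurableSet_singleton 1)
  have mVj1 : MeasurableSet {ω | Vj ω = 1} := hVj (measurableSet_singleton 1)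
  have mUi1 : MeasurableSet {ω | Ui ω = 1} := hUi (measurableSet_singleton 1)
  have mUj1 : MeasurableSet {ω | Uj ω = 1} := hUj (measurableSet_singleton 1)
  set A11 : Set Ω := {ω | Yi ω = 1 ∧ Yj ω = 1} with hA11_def
  set A10 : Set Ω := {ω | Yi ω = 1 ∧ Yj ω = 0} with hA10_def
  set A01 : Set Ω := {ω | Yi ω = 0 ∧ Yj ω = 1} with hA01_def
  set A00 : Set Ω := {ω | Yi ω = 0 ∧ Yj ω = 0} with hA00_def
  have mA11 : MeasurableSet A11 := mYi1.inter mYj1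
  have mA10 : MeasurableSet A10 := mYi1.inter mYj0
  have mA01 : MeasurableSet A01 := mYi0.inter mYj1
  have mA00 : MeasurableSet A00 := mYi0.inter mYj0
  set Bi : Set Ω := {ω | Ui ω = 1} with hBi_def
  set Bj : Set Ω := {ω | Uj ω = 1} with hBj_def
  set B2 : Set Ω := A10 ∩ Bj with hB2_def
  set B3 : Set Ω := A01 ∩ Bi with hB3_def
  set B4 : Set Ω := A00 ∩ (Bi ∩ Bj) with hB4_def
  have mB2 : MeasurableSet B2 := mA10.inter mUj1
  have mB3 : MeasurableSet B3 := mA01.inter mUi1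
  have mB4 : MeasurableSet B4 := mA00.inter (mUi1.inter mUj1)
  set G : Set Ω := {ω | Vi ω = 1} ∩ {ω | Vj ω = 1} with hG_def
  -- V = 1 almost everywhere
  have hVi1 : (ℙ {ω | Vi ω = 1}) = 1 := (ENNReal.toReal_eq_one_iff _).mp hVilaw
  have hVj1 : (ℙ {ω | Vj ω = 1}) = 1 := (ENNReal.toReal_eq_one_iff _).mp hVjlaw
  have hGc : ℙ Gᶜ = 0 := by
    rw [hG_def, Set.compl_inter]
    refine measure_union_null ?_ ?_
    · rw [measure_compl mVi1 (measure_ne_top _ _), hVi1, measure_univ, tsub_self]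
    · rw [measure_compl mVj1 (measure_ne_top _ _), hVj1, measure_univ, tsub_self]
  have hGae : ∀ᵐ ω ∂(ℙ : Measure Ω), ω ∈ G := mem_ae_iff.mpr hGc
  set E : Set Ω := {ω | εi ω = 1 ∧ εj ω = 1} with hE_def
  set F : Set Ω := A11 ∪ B2 ∪ B3 ∪ B4 with hF_def
  -- pointwise identification of the event
  have hmem : ∀ ω, ω ∈ G → (ω ∈ E ↔ ω ∈ F) := by
    intro ω hω
    rw [hG_def, Set.mem_inter_iff] at hω
    obtain ⟨hvi, hvj⟩ := hω
    simp only [Set.mem_setOf_eq] at hvi hvj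
    simp only [hE_def, hF_def, hB2_def, hB3_def, hB4_def, hA11_def, hA10_def, hA01_def,
      hA00_def, hBi_def, hBj_def, Set.mem_union, Set.mem_inter_iff, Set.mem_setOf_eq]
    rw [hεi ω, hεj ω, hvi, hvj]
    rcases hYi01 ω with hyi | hyi <;> rcases hYj01 ω with hyj | hyj <;>
      simp [hyi, hyj]
  have hEF : E =ᵐ[ℙ] F := by
    rw [Filter.eventuallyEq_set]
    filter_upwards [hGae] with ω hω using hmem ω hω
  -- generic constant-on-piece integral lemma
  have hint : ∀ (B : Set Ω) (c : ℝ), MeasurableSet B →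
      (∀ ω, ω ∈ B → ω ∈ G → Wi ω * Wj ω = c) →
      IntegrableOn (fun ω => Wi ω * Wj ω) B ℙ ∧
      (∫ ω in B, Wi ω * Wj ω) = c * (ℙ B).toReal := by
    intro B c mB hc
    have hae : (fun ω => Wi ω * Wj ω) =ᵐ[(ℙ : Measure Ω).restrict B] fun _ => c := by
      rw [Filter.EventuallyEq, ae_restrict_iff' mB]
      filter_upwards [hGae] with ω hω hB using hc ω hB hω
    refine ⟨(integrableOn_const (measure_ne_top _ _)).congr hae.symm, ?_⟩
    rw [integral_congr_ae hae, setIntegral_const, smul_eq_mul, mul_comm, measureReal_def]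
  -- value of the product on each piece
  have hval : ∀ ω, Wi ω * Wj ω =
      (Vi ω * Yi ω + Ui ω * (1 - Yi ω)) * (Vj ω * Yj ω + Uj ω * (1 - Yj ω))
        * ((Yi ω - P) * (Yj ω - P)) / (P * (1 - P)) := by
    intro ω
    rw [hWi ω, hWj ω, hεi ω, hεj ω, div_mul_div_comm, hsq]
    ring
  have hPne : P ≠ 0 := hP.ne'
  have hP'ne : (1:ℝ) - P ≠ 0 := hP'.ne'
  have hK'ne : (1:ℝ) - K ≠ 0 := hK'.ne'
  have hc1 : ∀ ω, ω ∈ A11 → ω ∈ G → Wi ω * Wj ω = (1 - P) / P := by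
    intro ω hB hGm
    rw [hA11_def, Set.mem_setOf_eq] at hB
    rw [hG_def, Set.mem_inter_iff] at hGm
    obtain ⟨hyi, hyj⟩ := hB
    obtain ⟨hvi, hvj⟩ := hGm
    simp only [Set.mem_setOf_eq] at hvi hvj
    rw [hval ω, hyi, hyj, hvi, hvj, div_eq_div_iff hPP.ne' hP.ne']
    ring
  have hc2 : ∀ ω, ω ∈ B2 → ω ∈ G → Wi ω * Wj ω = -1 := by
    intro ω hB hGm
    rw [hB2_def, Set.mem_inter_iff, hA10_def, hBj_def, Set.mem_setOf_eq,
      Set.mem_setOf_eq] at hB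
    rw [hG_def, Set.mem_inter_iff] at hGm
    obtain ⟨⟨hyi, hyj⟩, hu⟩ := hB
    obtain ⟨hvi, hvj⟩ := hGm
    simp only [Set.mem_setOf_eq] at hvi hvj
    rw [hval ω, hyi, hyj, hvi, hvj, hu, div_eq_iff hPP.ne']
    ring
  have hc3 : ∀ ω, ω ∈ B3 → ω ∈ G → Wi ω * Wj ω = -1 := by
    intro ω hB hGm
    rw [hB3_def, Set.mem_inter_iff, hA01_def, hBi_def, Set.mem_setOf_eq,
      Set.mem_setOf_eq] at hB
    rw [hG_def, Set.mem_inter_iff] at hGm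
    obtain ⟨⟨hyi, hyj⟩, hu⟩ := hB
    obtain ⟨hvi, hvj⟩ := hGm
    simp only [Set.mem_setOf_eq] at hvi hvj
    rw [hval ω, hyi, hyj, hvi, hvj, hu, div_eq_iff hPP.ne']
    ring
  have hc4 : ∀ ω, ω ∈ B4 → ω ∈ G → Wi ω * Wj ω = P / (1 - P) := by
    intro ω hB hGm
    rw [hB4_def, Set.mem_inter_iff, Set.mem_inter_iff, hA00_def, hBi_def, hBj_def,
      Set.mem_setOf_eq, Set.mem_setOf_eq, Set.mem_setOf_eq] at hB
    rw [hG_def, Set.mem_inter_iff] at hGm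
    obtain ⟨⟨hyi, hyj⟩, hui, huj⟩ := hB
    obtain ⟨hvi, hvj⟩ := hGm
    simp only [Set.mem_setOf_eq] at hvi hvj
    rw [hval ω, hyi, hyj, hvi, hvj, hui, huj, div_eq_div_iff hPP.ne' hP'.ne']
    ring
  obtain ⟨hI1, hJ1⟩ := hint A11 ((1 - P) / P) mA11 hc1
  obtain ⟨hI2, hJ2⟩ := hint B2 (-1) mB2 hc2
  obtain ⟨hI3, hJ3⟩ := hint B3 (-1) mB3 hc3
  obtain ⟨hI4, hJ4⟩ := hint B4 (P / (1 - P)) mB4 hc4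
  -- disjointness
  have disj : ∀ (S T : Set Ω) (f : Ω → ℝ),
      (∀ ω, ω ∈ S → f ω = 1) → (∀ ω, ω ∈ T → f ω = 0) → Disjoint S T := by
    intro S T f h1 h0
    rw [Set.disjoint_left]
    intro ω hS hT
    have := (h1 ω hS).symm.trans (h0 ω hT)
    exact one_ne_zero this
  have d12 : Disjoint A11 B2 :=
    disj _ _ Yj (fun ω hω => hω.2) (fun ω hω => hω.1.2)
  have d13 : Disjoint A11 B3 :=
    disj _ _ Yi (fun ω hω => hω.1) (fun ω hω => hω.1.1)
  have d14 : Disjoint A11 B4 :=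
    disj _ _ Yi (fun ω hω => hω.1) (fun ω hω => hω.1.1)
  have d23 : Disjoint B2 B3 :=
    disj _ _ Yi (fun ω hω => hω.1.1) (fun ω hω => hω.1.1)
  have d24 : Disjoint B2 B4 :=
    disj _ _ Yi (fun ω hω => hω.1.1) (fun ω hω => hω.1.1)
  have d34 : Disjoint B3 B4 :=
    disj _ _ Yj (fun ω hω => hω.1.2) (fun ω hω => hω.1.2)
  have d123 : Disjoint (A11 ∪ B2) B3 := Set.disjoint_union_left.mpr ⟨d13, d23⟩
  have d1234 : Disjoint (A11 ∪ B2 ∪ B3) B4 :=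
    Set.disjoint_union_left.mpr ⟨Set.disjoint_union_left.mpr ⟨d14, d24⟩, d34⟩
  -- integral over F
  have hIntF : (∫ ω in F, Wi ω * Wj ω) =
      (1 - P) / P * (ℙ A11).toReal + (-1) * (ℙ B2).toReal
        + (-1) * (ℙ B3).toReal + P / (1 - P) * (ℙ B4).toReal := by
    rw [hF_def, setIntegral_union d1234 mB4 ((hI1.union hI2).union hI3) hI4,
      setIntegral_union d123 mB3 (hI1.union hI2) hI3,
      setIntegral_union d12 mB2 hI1 hI2, hJ1, hJ2, hJ3, hJ4]
  -- measure of F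
  have hPFr : (ℙ F).toReal =
      (ℙ A11).toReal + (ℙ B2).toReal + (ℙ B3).toReal + (ℙ B4).toReal := by
    rw [hF_def, measure_union d1234 mB4, measure_union d123 mB3, measure_union d12 mB2,
      ENNReal.toReal_add (by finiteness) (by finiteness),
      ENNReal.toReal_add (by finiteness) (by finiteness),
      ENNReal.toReal_add (by finiteness) (by finiteness)]
  -- probabilities of the pieces via independence
  have mT10 : MeasurableSet {y : ℝ × ℝ | y.1 = 1 ∧ y.2 = 0} :=
    (measurable_fst (measurableSet_singleton 1)).inter
      (measurable_snd (measurableSet_singleton 0))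
  have mT01 : MeasurableSet {y : ℝ × ℝ | y.1 = 0 ∧ y.2 = 1} :=
    (measurable_fst (measurableSet_singleton 0)).inter
      (measurable_snd (measurableSet_singleton 1))
  have mT00 : MeasurableSet {y : ℝ × ℝ | y.1 = 0 ∧ y.2 = 0} :=
    (measurable_fst (measurableSet_singleton 0)).inter
      (measurable_snd (measurableSet_singleton 0))
  have mS2 : MeasurableSet {x : ℝ × ℝ × ℝ × ℝ | x.2.1 = 1} :=
    (measurable_fst.comp measurable_snd) (measurableSet_singleton 1)
  have mS3 : MeasurableSet {x : ℝ × ℝ × ℝ × ℝ | x.1 = 1} :=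
    measurable_fst (measurableSet_singleton 1)
  have mS4 : MeasurableSet {x : ℝ × ℝ × ℝ × ℝ | x.1 = 1 ∧ x.2.1 = 1} := mS3.inter mS2
  have hPB2 : ℙ B2 = ℙ Bj * ℙ A10 := by
    have h := hIndepY.measure_inter_preimage_eq_mul
      {x : ℝ × ℝ × ℝ × ℝ | x.2.1 = 1} {y : ℝ × ℝ | y.1 = 1 ∧ y.2 = 0} mS2 mT10
    rw [hB2_def, hA10_def, hBj_def, Set.inter_comm]
    exact h
  have hPB3 : ℙ B3 = ℙ Bi * ℙ A01 := by
    have h := hIndepY.measure_inter_preimage_eq_mul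
      {x : ℝ × ℝ × ℝ × ℝ | x.1 = 1} {y : ℝ × ℝ | y.1 = 0 ∧ y.2 = 1} mS3 mT01
    rw [hB3_def, hA01_def, hBi_def, Set.inter_comm]
    exact h
  have hUU : IndepFun Ui Uj ℙ := by
    have h := hIndepUV.indepFun (show (0 : Fin 4) ≠ 1 by decide)
    simpa using h
  have hBiBj : ℙ (Bi ∩ Bj) = ℙ Bi * ℙ Bj := by
    have h := hUU.measure_inter_preimage_eq_mul
      ({1} : Set ℝ) ({1} : Set ℝ) (measurableSet_singleton 1) (measurableSet_singleton 1)
    rw [hBi_def, hBj_def]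
    exact h
  have hPB4 : ℙ B4 = ℙ Bi * ℙ Bj * ℙ A00 := by
    have h := hIndepY.measure_inter_preimage_eq_mul
      {x : ℝ × ℝ × ℝ × ℝ | x.1 = 1 ∧ x.2.1 = 1} {y : ℝ × ℝ | y.1 = 0 ∧ y.2 = 0} mS4 mT00
    rw [hB4_def, hA00_def, hBi_def, hBj_def, Set.inter_comm, ← hBiBj, hBi_def, hBj_def]
    exact h
  have hPB2r : (ℙ B2).toReal = p * (ℙ A10).toReal := by
    rw [hPB2, ENNReal.toReal_mul, hUjlaw]
  have hPB3r : (ℙ B3).toReal = p * (ℙ A01).toReal := by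
    rw [hPB3, ENNReal.toReal_mul, hUilaw]
  have hPB4r : (ℙ B4).toReal = p * p * (ℙ A00).toReal := by
    rw [hPB4, ENNReal.toReal_mul, ENNReal.toReal_mul, hUilaw, hUjlaw]
  -- the event Yi ≠ Yj
  have dA : Disjoint A10 A01 :=
    disj _ _ Yi (fun ω hω => hω.1) (fun ω hω => hω.1)
  have hneq : {ω | Yi ω ≠ Yj ω} = A10 ∪ A01 := by
    ext ω
    simp only [Set.mem_setOf_eq, Set.mem_union, hA10_def, hA01_def]
    rcases hYi01 ω with hyi | hyi <;> rcases hYj01 ω with hyj | hyj <;> simp [hyi, hyj]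
  have hne2 : (ℙ {ω | Yi ω ≠ Yj ω}).toReal = (ℙ A10).toReal + (ℙ A01).toReal := by
    rw [hneq, measure_union dA mA01,
      ENNReal.toReal_add (measure_ne_top _ _) (measure_ne_top _ _)]
  -- conclude
  rw [setIntegral_congr_set hEF, measure_congr hEF, hIntF, hPFr, hPB2r, hPB3r, hPB4r, hne2]
  have hDeq : (ℙ A11).toReal + p * (ℙ A10).toReal + p * (ℙ A01).toReal
        + p * p * (ℙ A00).toReal
      = (ℙ A11).toReal + p ^ 2 * (ℙ A00).toReal
        + p * ((ℙ A10).toReal + (ℙ A01).toReal) := by ring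
  rw [hDeq]
  congr 1
  rw [hp_def]
  field_simp
  ring
end
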